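/- arXiv:2503.11871 — 6 statements merged into one kernel-verified Lean document; each statement's English description precedes it below -/
import Mathlib

section
/- Let G be a finite simple graph with at least two vertices and let S be a lexicographically optimal star partition of G with a designated center for each part. Suppose x is a leaf of a part A of S, y is a leaf of a part B of S, and xy is an edge of G. Then either A = B and |A| = 3 (so that x and y are the only two leaves of this part), or A ≠ B and |A| + |B| ≤ 5. -/
/-- A star partition of `G`. -/
def IsStarPartition {V : Type*} [Fintype V] [DecidableEq V] (G : SimpleGraph V)
    (P : Finset (Finset V)) : Prop :=
  (∀ v : V, ∃! S : Finset V, S ∈ P ∧ v ∈ S) ∧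
  (∀ S ∈ P, 2 ≤ S.card) ∧
  (∀ S ∈ P, ∃ c ∈ S, ∀ v ∈ S, v ≠ c → G.Adj c v)

/-- A star partition of `G` together with a designated center for each part. -/
def IsCenteredStarPartition {V : Type*} [Fintype V] [DecidableEq V] (G : SimpleGraph V)
    (P : Finset (Finset V)) (center : Finset V → V) : Prop :=
  (∀ v : V, ∃! S : Finset V, S ∈ P ∧ v ∈ S) ∧
  (∀ S ∈ P, 2 ≤ S.card) ∧
  (∀ S ∈ P, center S ∈ S ∧ ∀ v ∈ S, v ≠ center S → G.Adj (center S) v)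

/-- `starCounts P i` is the number of parts of `P` which are `i`-stars,
i.e. have exactly `i + 1` vertices. -/
def starCounts {V : Type*} [DecidableEq V] (P : Finset (Finset V)) : ℕ → ℕ :=
  fun i => (P.filter (fun S => S.card = i + 1)).card

/-- Lexicographic comparison of star-count sequences, read from large star sizes
downwards (the counts vanish above `Δ(G)`, so this is the comparison of
`(s_Δ, s_{Δ-1}, …, s_1)`). -/
def LexLE (s t : ℕ → ℕ) : Prop :=
  s = t ∨ ∃ i : ℕ, s i < t i ∧ ∀ j : ℕ, i < j → s j = t j

lemma lex_contra (s t : ℕ → ℕ) (h : LexLE s t) (i : ℕ) (h1 : t i < s i)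
    (h2 : ∀ j, i < j → t j = s j) : False := by
  rcases h with rfl | ⟨k, hk, hk2⟩
  · exact absurd h1 (lt_irrefl _)
  · rcases lt_trichotomy i k with h | rfl | h
    · exact absurd (h2 k h) (by omega)
    · omega
    · exact absurd (hk2 i h) (by omega)

lemma improve {V : Type*} [Fintype V] [DecidableEq V] (G : SimpleGraph V)
    (P Q : Finset (Finset V))
    (hopt : ∀ Q : Finset (Finset V), IsStarPartition G Q →
      LexLE (starCounts P) (starCounts Q))
    (hQ : IsStarPartition G Q) (A : Finset V) (hA : A ∈ P) (hA1 : 1 ≤ A.card)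
    (h1 : ∀ S ∈ Q, A.card ≤ S.card → S ∈ P ∧ S ≠ A)
    (h2 : ∀ S ∈ P, A.card < S.card → S ∈ Q) : False := by
  refine lex_contra _ _ (hopt Q hQ) (A.card - 1) ?_ ?_
  · have key : Q.filter (fun S => S.card = (A.card - 1) + 1) ⊆
        (P.filter (fun S => S.card = (A.card - 1) + 1)).erase A := by
      intro S hS
      rw [Finset.mem_filter] at hS
      obtain ⟨hSP, hSA⟩ := h1 S hS.1 (by omega)
      exact Finset.mem_erase.2 ⟨hSA, Finset.mem_filter.2 ⟨hSP, hS.2⟩⟩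
    have hAmem : A ∈ P.filter (fun S => S.card = (A.card - 1) + 1) :=
      Finset.mem_filter.2 ⟨hA, by omega⟩
    have := Finset.card_le_card key
    rw [Finset.card_erase_of_mem hAmem] at this
    have hpos : 0 < (P.filter (fun S => S.card = (A.card - 1) + 1)).card :=
      Finset.card_pos.2 ⟨A, hAmem⟩
    unfold starCounts
    omega
  · intro j hj
    unfold starCounts
    congr 1
    ext S
    simp only [Finset.mem_filter]
    constructor
    · rintro ⟨hSQ, hSc⟩
      exact ⟨(h1 S hSQ (by omega)).1, hSc⟩
    · rintro ⟨hSP, hSc⟩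
      exact ⟨h2 S hSP (by omega), hSc⟩

lemma rebuild {V : Type*} [Fintype V] [DecidableEq V]
    (P Q : Finset (Finset V)) (huniq : ∀ v : V, ∃! S : Finset V, S ∈ P ∧ v ∈ S)
    (hcov : ∀ v : V, ∀ S ∈ P, v ∈ S → ∃ T ∈ Q, v ∈ T)
    (hdisjQ : ∀ S ∈ Q, ∀ T ∈ Q, ∀ v : V, v ∈ S → v ∈ T → S = T) :
    ∀ v : V, ∃! S : Finset V, S ∈ Q ∧ v ∈ S := by
  intro v
  obtain ⟨S, ⟨hSP, hvS⟩, -⟩ := huniq v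
  obtain ⟨T, hTQ, hvT⟩ := hcov v S hSP hvS
  exact ⟨T, ⟨hTQ, hvT⟩, fun U ⟨hUQ, hvU⟩ => hdisjQ U hUQ T hTQ v hvU hvT⟩

lemma main_ne {V : Type*} [Fintype V] [DecidableEq V] (G : SimpleGraph V)
    (P : Finset (Finset V)) (center : Finset V → V)
    (hP : IsCenteredStarPartition G P center)
    (hopt : ∀ Q : Finset (Finset V), IsStarPartition G Q →
      LexLE (starCounts P) (starCounts Q))
    (A B : Finset V) (hA : A ∈ P) (hB : B ∈ P)
    (x y : V) (hxA : x ∈ A) (hxleaf : x ≠ center A)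
    (hyB : y ∈ B) (hyleaf : y ≠ center B)
    (hxy : G.Adj x y) (hAB : A ≠ B) (hba : B.card ≤ A.card)
    (h6 : 6 ≤ A.card + B.card) : False := by
  obtain ⟨huniq, hcard, hcenter⟩ := hP
  have hdisjP : ∀ S ∈ P, ∀ T ∈ P, ∀ v : V, v ∈ S → v ∈ T → S = T := by
    intro S hS T hT v hvS hvT
    obtain ⟨U, -, hU⟩ := huniq v
    rw [hU S ⟨hS, hvS⟩, hU T ⟨hT, hvT⟩]
  have hxy' : x ≠ y := G.ne_of_adj hxy
  have hyA : y ∉ A := fun h => hAB (hdisjP A hA B hB y h hyB)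
  have hxB : x ∉ B := fun h => hAB (hdisjP A hA B hB x hxA h)
  have hb2 : 2 ≤ B.card := hcard B hB
  have ha3 : 3 ≤ A.card := by omega
  have hcA := hcenter A hA
  have hcB := hcenter B hB
  by_cases hb3 : 3 ≤ B.card
  · -- both parts have at least 3 vertices: split off {x,y}
    set Q : Finset (Finset V) :=
      insert {x, y} (insert (A.erase x) (insert (B.erase y)
        ((P.erase A).erase B))) with hQdef
    have hmemQ : ∀ S : Finset V, S ∈ Q ↔ S = {x, y} ∨ S = A.erase x ∨
        S = B.erase y ∨ (S ∈ P ∧ S ≠ A ∧ S ≠ B) := by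
      intro S
      simp only [hQdef, Finset.mem_insert, Finset.mem_erase]
      tauto
    have hcxy : ({x, y} : Finset V).card = 2 := Finset.card_pair hxy'
    have hcAx : (A.erase x).card = A.card - 1 := Finset.card_erase_of_mem hxA
    have hcBy : (B.erase y).card = B.card - 1 := Finset.card_erase_of_mem hyB
    have hQstar : IsStarPartition G Q := by
      refine ⟨rebuild P Q huniq ?_ ?_, ?_, ?_⟩
      · intro v S hS hvS
        by_cases h1 : S = A
        · subst h1
          by_cases h2 : v = x
          · exact ⟨{x, y}, (hmemQ _).2 (Or.inl rfl), by simp [h2]⟩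
          · exact ⟨S.erase x, (hmemQ _).2 (Or.inr (Or.inl rfl)),
              Finset.mem_erase.2 ⟨h2, hvS⟩⟩
        · by_cases h2 : S = B
          · subst h2
            by_cases h3 : v = y
            · exact ⟨{x, y}, (hmemQ _).2 (Or.inl rfl), by simp [h3]⟩
            · exact ⟨S.erase y, (hmemQ _).2 (Or.inr (Or.inr (Or.inl rfl))),
                Finset.mem_erase.2 ⟨h3, hvS⟩⟩
          · exact ⟨S, (hmemQ _).2 (Or.inr (Or.inr (Or.inr ⟨hS, h1, h2⟩))), hvS⟩
      · intro S hS T hT v hvS hvT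
        rw [hmemQ] at hS hT
        rcases hS with rfl | rfl | rfl | ⟨hSP, hSA, hSB⟩ <;>
          rcases hT with rfl | rfl | rfl | ⟨hTP, hTA, hTB⟩ <;>
          simp -failIfUnchanged only [Finset.mem_insert, Finset.mem_singleton, Finset.mem_erase]
            at hvS hvT
        · rfl
        · rcases hvS with rfl | rfl
          · exact absurd rfl hvT.1
          · exact absurd hvT.2 hyA
        · rcases hvS with rfl | rfl
          · exact absurd hvT.2 hxB
          · exact absurd rfl hvT.1
        · rcases hvS with rfl | rfl
          · exact absurd (hdisjP T hTP A hA v hvT hxA) hTA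
          · exact absurd (hdisjP T hTP B hB v hvT hyB) hTB
        · rcases hvT with rfl | rfl
          · exact absurd rfl hvS.1
          · exact absurd hvS.2 hyA
        · rfl
        · exact absurd (hdisjP A hA B hB v hvS.2 hvT.2) hAB
        · exact absurd (hdisjP T hTP A hA v hvT hvS.2) hTA
        · rcases hvT with rfl | rfl
          · exact absurd hvS.2 hxB
          · exact absurd rfl hvS.1
        · exact absurd (hdisjP A hA B hB v hvT.2 hvS.2) hAB
        · rfl
        · exact absurd (hdisjP T hTP B hB v hvT hvS.2) hTB
        · rcases hvT with rfl | rfl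
          · exact absurd (hdisjP S hSP A hA v hvS hxA) hSA
          · exact absurd (hdisjP S hSP B hB v hvS hyB) hSB
        · exact absurd (hdisjP S hSP A hA v hvS hvT.2) hSA
        · exact absurd (hdisjP S hSP B hB v hvS hvT.2) hSB
        · exact hdisjP S hSP T hTP v hvS hvT
      · intro S hS
        rcases (hmemQ S).1 hS with rfl | rfl | rfl | ⟨hSP, -, -⟩
        · omega
        · omega
        · omega
        · exact hcard S hSP
      · intro S hS
        rcases (hmemQ S).1 hS with rfl | rfl | rfl | ⟨hSP, -, -⟩
        · refine ⟨x, by simp, ?_⟩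
          intro v hv hvx
          simp only [Finset.mem_insert, Finset.mem_singleton] at hv
          rcases hv with rfl | rfl
          · exact absurd rfl hvx
          · exact hxy
        · refine ⟨center A, Finset.mem_erase.2 ⟨Ne.symm hxleaf, hcA.1⟩, ?_⟩
          intro v hv hvc
          exact hcA.2 v (Finset.mem_erase.1 hv).2 hvc
        · refine ⟨center B, Finset.mem_erase.2 ⟨Ne.symm hyleaf, hcB.1⟩, ?_⟩
          intro v hv hvc
          exact hcB.2 v (Finset.mem_erase.1 hv).2 hvc
        · exact ⟨center S, (hcenter S hSP).1, (hcenter S hSP).2⟩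
    refine improve G P Q hopt hQstar A hA (by omega) ?_ ?_
    · intro S hS hle
      rcases (hmemQ S).1 hS with rfl | rfl | rfl | ⟨hSP, hSA, -⟩
      · omega
      · omega
      · omega
      · exact ⟨hSP, hSA⟩
    · intro S hSP hlt
      refine (hmemQ S).2 (Or.inr (Or.inr (Or.inr ⟨hSP, ?_, ?_⟩)))
      · rintro rfl; omega
      · rintro rfl; omega
  · -- B has exactly 2 vertices: B = {center B, y}; move x into B's star
    have hb2' : B.card = 2 := by omega
    have ha4 : 4 ≤ A.card := by omega
    have hBeq : ({center B, y} : Finset V) = B := by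
      apply Finset.eq_of_subset_of_card_le
      · intro v hv
        simp only [Finset.mem_insert, Finset.mem_singleton] at hv
        rcases hv with rfl | rfl
        · exact hcB.1
        · exact hyB
      · rw [hb2', Finset.card_pair (Ne.symm hyleaf)]
    set Q : Finset (Finset V) :=
      insert (insert x B) (insert (A.erase x) ((P.erase A).erase B)) with hQdef
    have hmemQ : ∀ S : Finset V, S ∈ Q ↔ S = insert x B ∨ S = A.erase x ∨
        (S ∈ P ∧ S ≠ A ∧ S ≠ B) := by
      intro S
      simp only [hQdef, Finset.mem_insert, Finset.mem_erase]
      tauto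
    have hcxB : (insert x B).card = 3 := by
      rw [Finset.card_insert_of_notMem hxB, hb2']
    have hcAx : (A.erase x).card = A.card - 1 := Finset.card_erase_of_mem hxA
    have hQstar : IsStarPartition G Q := by
      refine ⟨rebuild P Q huniq ?_ ?_, ?_, ?_⟩
      · intro v S hS hvS
        by_cases h1 : S = A
        · subst h1
          by_cases h2 : v = x
          · exact ⟨insert x B, (hmemQ _).2 (Or.inl rfl), by simp [h2]⟩
          · exact ⟨S.erase x, (hmemQ _).2 (Or.inr (Or.inl rfl)),
              Finset.mem_erase.2 ⟨h2, hvS⟩⟩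
        · by_cases h2 : S = B
          · subst h2
            exact ⟨insert x S, (hmemQ _).2 (Or.inl rfl),
              Finset.mem_insert_of_mem hvS⟩
          · exact ⟨S, (hmemQ _).2 (Or.inr (Or.inr ⟨hS, h1, h2⟩)), hvS⟩
      · intro S hS T hT v hvS hvT
        rw [hmemQ] at hS hT
        rcases hS with rfl | rfl | ⟨hSP, hSA, hSB⟩ <;>
          rcases hT with rfl | rfl | ⟨hTP, hTA, hTB⟩ <;>
          simp -failIfUnchanged only [Finset.mem_insert, Finset.mem_erase] at hvS hvT
        · rfl
        · rcases hvS with rfl | hvB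
          · exact absurd rfl hvT.1
          · exact absurd (hdisjP A hA B hB v hvT.2 hvB) hAB
        · rcases hvS with rfl | hvB
          · exact absurd (hdisjP T hTP A hA v hvT hxA) hTA
          · exact absurd (hdisjP T hTP B hB v hvT hvB) hTB
        · rcases hvT with rfl | hvB
          · exact absurd rfl hvS.1
          · exact absurd (hdisjP A hA B hB v hvS.2 hvB) hAB
        · rfl
        · exact absurd (hdisjP T hTP A hA v hvT hvS.2) hTA
        · rcases hvT with rfl | hvB
          · exact absurd (hdisjP S hSP A hA v hvS hxA) hSA
          · exact absurd (hdisjP S hSP B hB v hvS hvB) hSB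
        · exact absurd (hdisjP S hSP A hA v hvS hvT.2) hSA
        · exact hdisjP S hSP T hTP v hvS hvT
      · intro S hS
        rcases (hmemQ S).1 hS with rfl | rfl | ⟨hSP, -, -⟩
        · omega
        · omega
        · exact hcard S hSP
      · intro S hS
        rcases (hmemQ S).1 hS with rfl | rfl | ⟨hSP, -, -⟩
        · refine ⟨y, Finset.mem_insert_of_mem hyB, ?_⟩
          intro v hv hvy
          rcases Finset.mem_insert.1 hv with rfl | hvB
          · exact hxy.symm
          · rw [← hBeq] at hvB
            simp only [Finset.mem_insert, Finset.mem_singleton] at hvB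
            rcases hvB with rfl | rfl
            · exact (hcB.2 y hyB hyleaf).symm
            · exact absurd rfl hvy
        · refine ⟨center A, Finset.mem_erase.2 ⟨Ne.symm hxleaf, hcA.1⟩, ?_⟩
          intro v hv hvc
          exact hcA.2 v (Finset.mem_erase.1 hv).2 hvc
        · exact ⟨center S, (hcenter S hSP).1, (hcenter S hSP).2⟩
    refine improve G P Q hopt hQstar A hA (by omega) ?_ ?_
    · intro S hS hle
      rcases (hmemQ S).1 hS with rfl | rfl | ⟨hSP, hSA, -⟩
      · omega
      · omega
      · exact ⟨hSP, hSA⟩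
    · intro S hSP hlt
      refine (hmemQ S).2 (Or.inr (Or.inr ⟨hSP, ?_, ?_⟩))
      · rintro rfl; omega
      · rintro rfl; omega

/-- In a lexicographically optimal star partition, if `x` is a leaf of a
part `A` and `y` is a leaf of a part `B` with `xy ∈ E(G)`, then either `A = B` and
`|A| = 3`, or `A ≠ B` and `|A| + |B| ≤ 5`. -/
theorem stmt9 {V : Type*} [Fintype V] [DecidableEq V] (G : SimpleGraph V)
    (h2 : 2 ≤ Fintype.card V)
    (P : Finset (Finset V)) (center : Finset V → V)
    (hP : IsCenteredStarPartition G P center)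
    (hopt : ∀ Q : Finset (Finset V), IsStarPartition G Q →
      LexLE (starCounts P) (starCounts Q))
    (A B : Finset V) (hA : A ∈ P) (hB : B ∈ P)
    (x y : V) (hxA : x ∈ A) (hxleaf : x ≠ center A)
    (hyB : y ∈ B) (hyleaf : y ≠ center B)
    (hxy : G.Adj x y) :
    (A = B ∧ A.card = 3) ∨ (A ≠ B ∧ A.card + B.card ≤ 5) := by
  have hxy' : x ≠ y := G.ne_of_adj hxy
  by_cases hAB : A = B
  · left
    refine ⟨hAB, ?_⟩
    subst hAB
    obtain ⟨huniq, hcard, hcenter⟩ := hP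
    have hdisjP : ∀ S ∈ P, ∀ T ∈ P, ∀ v : V, v ∈ S → v ∈ T → S = T := by
      intro S hS T hT v hvS hvT
      obtain ⟨U, -, hU⟩ := huniq v
      rw [hU S ⟨hS, hvS⟩, hU T ⟨hT, hvT⟩]
    have hcA := hcenter A hA
    have ha3 : 3 ≤ A.card := by
      have hsub : ({x, y, center A} : Finset V) ⊆ A := by
        intro v hv
        simp only [Finset.mem_insert, Finset.mem_singleton] at hv
        rcases hv with rfl | rfl | rfl
        · exact hxA
        · exact hyB
        · exact hcA.1
      have hc3 : ({x, y, center A} : Finset V).card = 3 := by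
        rw [Finset.card_insert_of_notMem (by simp [hxy', hxleaf]),
          Finset.card_pair hyleaf]
      rw [← hc3]
      exact Finset.card_le_card hsub
    by_contra hne
    have ha4 : 4 ≤ A.card := by omega
    set D : Finset V := (A.erase x).erase y with hDdef
    have hmemD : ∀ v : V, v ∈ D ↔ v ≠ y ∧ v ≠ x ∧ v ∈ A := by
      intro v; simp [hDdef, Finset.mem_erase, and_assoc]
    have hyAx : y ∈ A.erase x := Finset.mem_erase.2 ⟨Ne.symm hxy', hyB⟩
    have hcD : D.card = A.card - 2 := by
      rw [hDdef, Finset.card_erase_of_mem hyAx, Finset.card_erase_of_mem hxA]; omega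
    set Q : Finset (Finset V) := insert {x, y} (insert D (P.erase A)) with hQdef
    have hmemQ : ∀ S : Finset V, S ∈ Q ↔ S = {x, y} ∨ S = D ∨
        (S ∈ P ∧ S ≠ A) := by
      intro S
      simp only [hQdef, Finset.mem_insert, Finset.mem_erase]
      tauto
    have hcxy : ({x, y} : Finset V).card = 2 := Finset.card_pair hxy'
    have hQstar : IsStarPartition G Q := by
      refine ⟨rebuild P Q huniq ?_ ?_, ?_, ?_⟩
      · intro v S hS hvS
        by_cases h1 : S = A
        · subst h1
          by_cases h2 : v = x
          · exact ⟨{x, y}, (hmemQ _).2 (Or.inl rfl), by simp [h2]⟩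
          · by_cases h3 : v = y
            · exact ⟨{x, y}, (hmemQ _).2 (Or.inl rfl), by simp [h3]⟩
            · exact ⟨D, (hmemQ _).2 (Or.inr (Or.inl rfl)),
                (hmemD v).2 ⟨h3, h2, hvS⟩⟩
        · exact ⟨S, (hmemQ _).2 (Or.inr (Or.inr ⟨hS, h1⟩)), hvS⟩
      · intro S hS T hT v hvS hvT
        rw [hmemQ] at hS hT
        rcases hS with rfl | rfl | ⟨hSP, hSA⟩ <;>
          rcases hT with rfl | rfl | ⟨hTP, hTA⟩
        · rfl
        · rw [hmemD] at hvT
          simp only [Finset.mem_insert, Finset.mem_singleton] at hvS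
          rcases hvS with rfl | rfl
          · exact absurd rfl hvT.2.1
          · exact absurd rfl hvT.1
        · simp only [Finset.mem_insert, Finset.mem_singleton] at hvS
          rcases hvS with rfl | rfl
          · exact absurd (hdisjP T hTP A hA v hvT hxA) hTA
          · exact absurd (hdisjP T hTP A hA v hvT hyB) hTA
        · rw [hmemD] at hvS
          simp only [Finset.mem_insert, Finset.mem_singleton] at hvT
          rcases hvT with rfl | rfl
          · exact absurd rfl hvS.2.1
          · exact absurd rfl hvS.1
        · rfl
        · rw [hmemD] at hvS
          exact absurd (hdisjP T hTP A hA v hvT hvS.2.2) hTA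
        · simp only [Finset.mem_insert, Finset.mem_singleton] at hvT
          rcases hvT with rfl | rfl
          · exact absurd (hdisjP S hSP A hA v hvS hxA) hSA
          · exact absurd (hdisjP S hSP A hA v hvS hyB) hSA
        · rw [hmemD] at hvT
          exact absurd (hdisjP S hSP A hA v hvS hvT.2.2) hSA
        · exact hdisjP S hSP T hTP v hvS hvT
      · intro S hS
        rcases (hmemQ S).1 hS with rfl | rfl | ⟨hSP, -⟩
        · omega
        · omega
        · exact hcard S hSP
      · intro S hS
        rcases (hmemQ S).1 hS with rfl | rfl | ⟨hSP, -⟩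
        · refine ⟨x, by simp, ?_⟩
          intro v hv hvx
          simp only [Finset.mem_insert, Finset.mem_singleton] at hv
          rcases hv with rfl | rfl
          · exact absurd rfl hvx
          · exact hxy
        · refine ⟨center A, (hmemD _).2 ⟨Ne.symm hyleaf, Ne.symm hxleaf,
            hcA.1⟩, ?_⟩
          intro v hv hvc
          exact hcA.2 v ((hmemD v).1 hv).2.2 hvc
        · exact ⟨center S, (hcenter S hSP).1, (hcenter S hSP).2⟩
    exact improve G P Q hopt hQstar A hA (by omega)
      (fun S hS hle => by
        rcases (hmemQ S).1 hS with rfl | rfl | ⟨hSP, hSA⟩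
        · omega
        · omega
        · exact ⟨hSP, hSA⟩)
      (fun S hSP hlt => (hmemQ S).2 (Or.inr (Or.inr ⟨hSP, by rintro rfl; omega⟩)))
  · right
    refine ⟨hAB, ?_⟩
    by_contra h5
    have h6 : 6 ≤ A.card + B.card := by omega
    rcases le_total B.card A.card with hba | hba
    · exact main_ne G P center hP hopt A B hA hB x y hxA hxleaf hyB hyleaf
        hxy hAB hba h6
    · exact main_ne G P center hP hopt B A hB hA y x hyB hyleaf hxA hxleaf
        hxy.symm (Ne.symm hAB) hba (by omega)
end

section
/- Let G be a finite simple graph with at least two vertices and let S be a lexicographically optimal star partition of G with a designated center for each part. Suppose x is a leaf of a part A of S, y is the designated center of a different part B of S, and xy is an edge of G. Then |A| ≤ |B| + 1. -/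
theorem not_lexLE_of_lt_of_forall_gt_eq {s t : ℕ → ℕ} {i : ℕ} (hlt : t i < s i)
    (heq : ∀ j, i < j → t j = s j) : ¬ LexLE s t := by
  rintro (rfl | ⟨k, hk, hgt⟩)
  · exact lt_irrefl _ hlt
  · rcases lt_trichotomy k i with hki | rfl | hik
    · exact absurd (hgt i hki) (ne_of_gt hlt)
    · exact lt_asymm hk hlt
    · exact absurd (heq k hik) (ne_of_gt hk)

theorem existsUnique_mem_of_pairwiseDisjoint {V : Type*} {P : Finset (Finset V)}
    (hdisj : (P : Set (Finset V)).PairwiseDisjoint id) (hcov : ∀ v, ∃ S ∈ P, v ∈ S) (v : V) :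
    ∃! S, S ∈ P ∧ v ∈ S := by
  obtain ⟨S, hS, hvS⟩ := hcov v
  exact ⟨S, ⟨hS, hvS⟩, fun T ⟨hT, hvT⟩ => hdisj.elim_finset hT hS v hvT hvS⟩

section MoveVertex

variable {V : Type*} [DecidableEq V]

theorem starCounts_insert {P : Finset (Finset V)} {S : Finset V} (hS : S ∉ P) (i : ℕ) :
    starCounts (insert S P) i = starCounts P i + if S.card = i + 1 then 1 else 0 := by
  unfold starCounts
  rw [Finset.filter_insert]
  split_ifs
  · exact Finset.card_insert_of_notMem fun h => hS (Finset.mem_filter.1 h).1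
  · rfl

def moveVertex (P : Finset (Finset V)) (A B : Finset V) (x : V) : Finset (Finset V) :=
  insert (A.erase x) (insert (insert x B) ((P.erase A).erase B))

theorem starCounts_moveVertex {P : Finset (Finset V)} {A B : Finset V} {x : V}
    (hA : A ∈ P) (hB : B ∈ P) (hAB : A ≠ B) (hA' : A.erase x ∉ P) (hB' : insert x B ∉ P)
    (i : ℕ) :
    starCounts (moveVertex P A B x) i + (if A.card = i + 1 then 1 else 0) +
        (if B.card = i + 1 then 1 else 0) =
      starCounts P i + (if (A.erase x).card = i + 1 then 1 else 0) +
        (if (insert x B).card = i + 1 then 1 else 0) := by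
  set R := (P.erase A).erase B
  have hR : R ⊆ P := (Finset.erase_subset _ _).trans (Finset.erase_subset _ _)
  have hBR : B ∉ R := Finset.notMem_erase B _
  have hAR : A ∉ insert B R := by
    simp only [R, Finset.mem_insert, Finset.mem_erase]
    tauto
  have hB'R : insert x B ∉ R := fun h => hB' (hR h)
  have hA'R : A.erase x ∉ insert (insert x B) R := by
    intro h
    rcases Finset.mem_insert.1 h with h | h
    · exact Finset.notMem_erase x A (h ▸ Finset.mem_insert_self x B)
    · exact hA' (hR h)
  have hP : P = insert A (insert B R) := by
    rw [Finset.insert_erase (Finset.mem_erase.2 ⟨hAB.symm, hB⟩), Finset.insert_erase hA]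
  rw [moveVertex, starCounts_insert hA'R, starCounts_insert hB'R, hP,
    starCounts_insert hAR, starCounts_insert hBR]
  omega

end MoveVertex

namespace IsCenteredStarPartition

variable {V : Type*} [Fintype V] [DecidableEq V] {G : SimpleGraph V} {P : Finset (Finset V)}
  {center : Finset V → V} {A B : Finset V} {x : V}

theorem eq_of_mem_of_mem (hP : IsCenteredStarPartition G P center) {S T : Finset V} {v : V}
    (hS : S ∈ P) (hT : T ∈ P) (hvS : v ∈ S) (hvT : v ∈ T) : S = T :=
  (hP.1 v).unique ⟨hS, hvS⟩ ⟨hT, hvT⟩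

theorem pairwiseDisjoint (hP : IsCenteredStarPartition G P center) :
    (P : Set (Finset V)).PairwiseDisjoint id := fun _ hS _ hT hne =>
  Finset.disjoint_left.2 fun _ hvS hvT => hne (hP.eq_of_mem_of_mem hS hT hvS hvT)

theorem notMem_of_mem_of_ne (hP : IsCenteredStarPartition G P center) (hA : A ∈ P)
    (hB : B ∈ P) (hAB : A ≠ B) (hxA : x ∈ A) : x ∉ B :=
  fun hxB => hAB (hP.eq_of_mem_of_mem hA hB hxA hxB)

theorem erase_notMem (hP : IsCenteredStarPartition G P center) (hA : A ∈ P) (hxA : x ∈ A)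
    (hxleaf : x ≠ center A) : A.erase x ∉ P := by
  intro h
  have hcA := (hP.2.2 A hA).1
  have hA' : A.erase x = A :=
    hP.eq_of_mem_of_mem h hA (Finset.mem_erase.2 ⟨hxleaf.symm, hcA⟩) hcA
  exact Finset.notMem_erase x A (hA'.symm ▸ hxA)

theorem insert_notMem (hP : IsCenteredStarPartition G P center) (hA : A ∈ P) (hB : B ∈ P)
    (hAB : A ≠ B) (hxA : x ∈ A) : insert x B ∉ P := fun h =>
  hAB <| (hP.eq_of_mem_of_mem h hA (Finset.mem_insert_self x B) hxA).symm.trans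
    (hP.eq_of_mem_of_mem h hB (Finset.mem_insert_of_mem (hP.2.2 B hB).1) (hP.2.2 B hB).1)

theorem pairwiseDisjoint_moveVertex (hP : IsCenteredStarPartition G P center) (hA : A ∈ P)
    (hB : B ∈ P) (hAB : A ≠ B) (hxA : x ∈ A) :
    (moveVertex P A B x : Set (Finset V)).PairwiseDisjoint id := by
  have hdisj := hP.pairwiseDisjoint
  have hR {S : Finset V} (hS : S ∈ (P.erase A).erase B) : Disjoint A S ∧ Disjoint B S := by
    obtain ⟨hSB, hSA, hSP⟩ : S ≠ B ∧ S ≠ A ∧ S ∈ P := by simpa only [Finset.mem_erase] using hS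
    exact ⟨hdisj hA hSP hSA.symm, hdisj hB hSP hSB.symm⟩
  rw [moveVertex, Finset.coe_insert, Finset.coe_insert]
  refine ((hdisj.subset ?_).insert fun S hS _ => ?_).insert ?_
  · exact Finset.coe_subset.2 ((Finset.erase_subset _ _).trans (Finset.erase_subset _ _))
  · exact Finset.disjoint_insert_left.2 ⟨Finset.disjoint_left.1 (hR hS).1 hxA, (hR hS).2⟩
  · rintro S (rfl | hS) _
    · exact Finset.disjoint_insert_right.2
        ⟨Finset.notMem_erase x A, (hdisj hA hB hAB).mono_left (Finset.erase_subset x A)⟩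
    · exact (hR hS).1.mono_left (Finset.erase_subset x A)

theorem exists_mem_moveVertex (hP : IsCenteredStarPartition G P center) (v : V) :
    ∃ S ∈ moveVertex P A B x, v ∈ S := by
  by_cases hvx : v = x
  · exact ⟨insert x B, by simp [moveVertex], hvx ▸ Finset.mem_insert_self x B⟩
  by_cases hvA : v ∈ A
  · exact ⟨A.erase x, Finset.mem_insert_self _ _, Finset.mem_erase.2 ⟨hvx, hvA⟩⟩
  by_cases hvB : v ∈ B
  · exact ⟨insert x B, by simp [moveVertex], Finset.mem_insert_of_mem hvB⟩
  obtain ⟨S, ⟨hSP, hvS⟩, -⟩ := hP.1 v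
  refine ⟨S, ?_, hvS⟩
  have hSA : S ≠ A := fun h => hvA (h ▸ hvS)
  have hSB : S ≠ B := fun h => hvB (h ▸ hvS)
  simp [moveVertex, hSP, hSA, hSB]

theorem isStarPartition_moveVertex (hP : IsCenteredStarPartition G P center) (hA : A ∈ P)
    (hB : B ∈ P) (hAB : A ≠ B) (hxA : x ∈ A) (hxleaf : x ≠ center A)
    (hxy : G.Adj (center B) x) (hAcard : 3 ≤ A.card) :
    IsStarPartition G (moveVertex P A B x) := by
  refine ⟨existsUnique_mem_of_pairwiseDisjoint (hP.pairwiseDisjoint_moveVertex hA hB hAB hxA)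
    hP.exists_mem_moveVertex, ?_, ?_⟩ <;>
    simp only [moveVertex, Finset.forall_mem_insert]
  · obtain ⟨-, hcard, -⟩ := hP
    refine ⟨?_, ?_, fun S hS => ?_⟩
    · rw [Finset.card_erase_of_mem hxA]
      omega
    · exact (hcard B hB).trans (Finset.card_le_card (Finset.subset_insert x B))
    · exact hcard S (Finset.mem_of_mem_erase (Finset.mem_of_mem_erase hS))
  · obtain ⟨-, -, hcent⟩ := hP
    refine ⟨?_, ?_, fun S hS => ?_⟩
    · exact ⟨center A, Finset.mem_erase.2 ⟨hxleaf.symm, (hcent A hA).1⟩,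
        fun v hv => (hcent A hA).2 v (Finset.mem_of_mem_erase hv)⟩
    · exact ⟨center B, Finset.mem_insert_of_mem (hcent B hB).1, fun _ => hxy, (hcent B hB).2⟩
    · have hSP := Finset.mem_of_mem_erase (Finset.mem_of_mem_erase hS)
      exact ⟨center S, hcent S hSP⟩

end IsCenteredStarPartition

theorem stmt10_general {V : Type*} [Fintype V] [DecidableEq V] (G : SimpleGraph V)
    (P : Finset (Finset V)) (center : Finset V → V)
    (hP : IsCenteredStarPartition G P center)
    (hopt : ∀ Q : Finset (Finset V), IsStarPartition G Q →
      LexLE (starCounts P) (starCounts Q))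
    (A B : Finset V) (hA : A ∈ P) (hB : B ∈ P) (hAB : A ≠ B)
    (x : V) (hxA : x ∈ A) (hxleaf : x ≠ center A)
    (hxy : G.Adj x (center B)) :
    A.card ≤ B.card + 1 := by
  by_contra! hlarge
  have hBcard := hP.2.1 B hB
  have hQ := hP.isStarPartition_moveVertex hA hB hAB hxA hxleaf hxy.symm (by omega)
  have hcount := starCounts_moveVertex hA hB hAB (hP.erase_notMem hA hxA hxleaf)
    (hP.insert_notMem hA hB hAB hxA)
  rw [Finset.card_erase_of_mem hxA,
    Finset.card_insert_of_notMem (hP.notMem_of_mem_of_ne hA hB hAB hxA)] at hcount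
  refine not_lexLE_of_lt_of_forall_gt_eq (i := A.card - 1) ?_ (fun j hj => ?_) (hopt _ hQ)
  · have := hcount (A.card - 1)
    split_ifs at this <;> omega
  · have := hcount j
    split_ifs at this <;> omega

/-- In a lexicographically optimal star partition, if `x` is a leaf of
a part `A` and `y` is the designated center of a different part `B` with `xy ∈ E(G)`,
then `|A| ≤ |B| + 1`. -/
theorem stmt10 {V : Type*} [Fintype V] [DecidableEq V] (G : SimpleGraph V)
    (h2 : 2 ≤ Fintype.card V)
    (P : Finset (Finset V)) (center : Finset V → V)
    (hP : IsCenteredStarPartition G P center)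
    (hopt : ∀ Q : Finset (Finset V), IsStarPartition G Q →
      LexLE (starCounts P) (starCounts Q))
    (A B : Finset V) (hA : A ∈ P) (hB : B ∈ P) (hAB : A ≠ B)
    (x : V) (hxA : x ∈ A) (hxleaf : x ≠ center A)
    (hxy : G.Adj x (center B)) :
    A.card ≤ B.card + 1 :=
  stmt10_general G P center hP hopt A B hA hB hAB x hxA hxleaf hxy
end

section
/- Let G be a finite simple graph with at least two vertices and let S be a lexicographically optimal star partition of G with a designated center for each part. Suppose A_1, A_2, …, A_r are pairwise distinct parts of S such that |A_1| = σ(G) + 1 and, for every j ∈ {1,…,r−1}, some leaf of A_j is adjacent in G to the designated center of A_{j+1}. Then |A_r| ≥ σ(G). -/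
/-- The star partition width `σ(G)`: the smallest `k` such that `G` has a
`k`-star partition. -/
noncomputable def starPartitionWidth {V : Type*} [Fintype V] [DecidableEq V]
    (G : SimpleGraph V) : ℕ :=
  sInf {k : ℕ | ∃ P : Finset (Finset V), IsStarPartition G P ∧ ∀ S ∈ P, S.card ≤ k + 1}

/-!
Suppose the last part `A_r` had fewer than `σ(G)` vertices. Move every witnessing leaf
`x_j ∈ A_j` into `A_{j+1}`; the centers stay put, so this is again a star partition. Only
the ends of the path change size: `A_1` drops from `σ(G) + 1` to `σ(G)` vertices and `A_r`
grows to at most `σ(G)`. So no star with more than `σ(G)` leaves is created while one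
`σ(G)`-star disappears, and the new partition is lexicographically smaller.
-/

open Finset

theorem not_lexLE_of_lt_of_le {s t : ℕ → ℕ} {k : ℕ} (hk : t k < s k)
    (hle : ∀ i, k < i → t i ≤ s i) : ¬ LexLE s t := by
  rintro (rfl | ⟨i, hlt, heq⟩)
  · exact lt_irrefl _ hk
  · rcases lt_trichotomy i k with h | rfl | h
    · exact (heq k h ▸ hk).false
    · exact (hlt.trans hk).false
    · exact (hle i h).not_gt hlt

theorem injOn_of_existsUnique_mem {V : Type*} {P : Finset (Finset V)} {N : Finset V → Finset V}
    (huniq : ∀ v, ∃! S, S ∈ P ∧ v ∈ N S) (hne : ∀ S ∈ P, (N S).Nonempty) :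
    Set.InjOn N P := by
  intro S hS T hT h
  obtain ⟨v, hv⟩ := hne S hS
  exact (huniq v).unique ⟨hS, hv⟩ ⟨hT, h ▸ hv⟩

section Image

variable {V : Type*} [DecidableEq V]

theorem starCounts_image {P : Finset (Finset V)} {N : Finset V → Finset V}
    (hN : Set.InjOn N P) (i : ℕ) :
    starCounts (P.image N) i = #{S ∈ P | #(N S) = i + 1} := by
  rw [starCounts, filter_image, card_image_of_injOn (hN.mono (filter_subset _ _))]

theorem not_lexLE_starCounts_image {P : Finset (Finset V)} {N : Finset V → Finset V}
    (hN : Set.InjOn N P) {k : ℕ} (hsize : ∀ S ∈ P, #(N S) = #S ∨ #(N S) ≤ k)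
    {S₀ : Finset V} (hS₀ : S₀ ∈ P) (hS₀card : #S₀ = k + 1) (hNS₀ : #(N S₀) ≤ k) :
    ¬ LexLE (starCounts P) (starCounts (P.image N)) := by
  have hsub : ∀ i, k ≤ i → {S ∈ P | #(N S) = i + 1} ⊆ {S ∈ P | #S = i + 1} := by
    intro i hi S hS
    rw [mem_filter] at hS ⊢
    exact ⟨hS.1, by rcases hsize S hS.1 with h | h <;> omega⟩
  refine not_lexLE_of_lt_of_le (k := k) ?_ fun i hi => ?_
  · rw [starCounts_image hN]
    refine card_lt_card ((ssubset_iff_of_subset (hsub k le_rfl)).2 ⟨S₀, ?_, ?_⟩)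
    · exact mem_filter.2 ⟨hS₀, hS₀card⟩
    · exact fun h => by rw [mem_filter] at h; omega
  · rw [starCounts_image hN]
    exact card_le_card (hsub i hi.le)

end Image

section Partition

variable {V : Type*} [Fintype V] [DecidableEq V] {G : SimpleGraph V}
  {P : Finset (Finset V)} {center : Finset V → V}

theorem IsCenteredStarPartition.eq_of_mem_of_mem_s11 (hP : IsCenteredStarPartition G P center)
    {S T : Finset V} {v : V} (hS : S ∈ P) (hT : T ∈ P) (hvS : v ∈ S) (hvT : v ∈ T) :
    S = T :=
  (hP.1 v).unique ⟨hS, hvS⟩ ⟨hT, hvT⟩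

theorem isStarPartition_image {N : Finset V → Finset V}
    (huniq : ∀ v, ∃! S, S ∈ P ∧ v ∈ N S) (hcenter : ∀ S ∈ P, center S ∈ N S)
    (hadj : ∀ S ∈ P, ∀ v ∈ N S, v ≠ center S → G.Adj (center S) v)
    (hcard : ∀ S ∈ P, 2 ≤ #(N S)) :
    IsStarPartition G (P.image N) := by
  refine ⟨fun v => ?_, by simpa using hcard, ?_⟩
  · obtain ⟨S, ⟨hS, hv⟩, hSuniq⟩ := huniq v
    refine ⟨N S, ⟨mem_image_of_mem N hS, hv⟩, ?_⟩
    rintro _ ⟨hNT, hvT⟩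
    obtain ⟨T, hT, rfl⟩ := mem_image.1 hNT
    rw [hSuniq T ⟨hT, hvT⟩]
  · simp only [forall_mem_image]
    exact fun S hS => ⟨center S, hcenter S hS, hadj S hS⟩

end Partition

/-- A directed path `A 0 → A 1 → ⋯ → A (r - 1)` of distinct parts in the star digraph:
the arc `A j → A (j + 1)` is witnessed by the leaf `x j`. -/
structure IsStarDigraphPath {V : Type*} [Fintype V] [DecidableEq V] (G : SimpleGraph V)
    (P : Finset (Finset V)) (center : Finset V → V) (r : ℕ) (A : ℕ → Finset V)
    (x : ℕ → V) : Prop where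
  mem : ∀ j, j < r → A j ∈ P
  injOn : Set.InjOn A (Set.Iio r)
  leaf_mem : ∀ j, j + 1 < r → x j ∈ A j
  leaf_ne_center : ∀ j, j + 1 < r → x j ≠ center (A j)
  adj : ∀ j, j + 1 < r → G.Adj (x j) (center (A (j + 1)))

/-- The part replacing `S` when every leaf `x i` moves from `A i` to `A (i + 1)`. -/
def pathShift {V : Type*} [DecidableEq V] (r : ℕ) (A : ℕ → Finset V) (x : ℕ → V)
    (S : Finset V) : Finset V :=
  S \ (range (r - 1)).image x ∪ {i ∈ range (r - 1) | A (i + 1) = S}.image x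

theorem mem_pathShift {V : Type*} [DecidableEq V] {r : ℕ} {A : ℕ → Finset V} {x : ℕ → V}
    {S : Finset V} {v : V} :
    v ∈ pathShift r A x S ↔
      (v ∈ S ∧ ∀ i, i + 1 < r → x i ≠ v) ∨ ∃ i, i + 1 < r ∧ A (i + 1) = S ∧ x i = v := by
  simp only [pathShift, mem_union, mem_sdiff, mem_image, mem_filter, mem_range,
    Nat.lt_sub_iff_add_lt, not_exists, not_and, and_assoc]

namespace IsStarDigraphPath

variable {V : Type*} [Fintype V] [DecidableEq V] {G : SimpleGraph V}
  {P : Finset (Finset V)} {center : Finset V → V} {r : ℕ} {A : ℕ → Finset V} {x : ℕ → V}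

theorem eq_of_leaf_mem (hp : IsStarDigraphPath G P center r A x)
    (hP : IsCenteredStarPartition G P center) {S : Finset V} {i : ℕ} (hS : S ∈ P)
    (hi : i + 1 < r) (hxS : x i ∈ S) : A i = S :=
  hP.eq_of_mem_of_mem_s11 (hp.mem i (by omega)) hS (hp.leaf_mem i hi) hxS

theorem leaf_inj (hp : IsStarDigraphPath G P center r A x)
    (hP : IsCenteredStarPartition G P center) {i j : ℕ} (hi : i + 1 < r) (hj : j + 1 < r)
    (h : x i = x j) : i = j :=
  hp.injOn (show i < r by omega) (show j < r by omega)
    (hp.eq_of_leaf_mem hP (hp.mem j (by omega)) hi (h ▸ hp.leaf_mem j hj))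

theorem existsUnique_mem_pathShift (hp : IsStarDigraphPath G P center r A x)
    (hP : IsCenteredStarPartition G P center) (v : V) :
    ∃! S, S ∈ P ∧ v ∈ pathShift r A x S := by
  by_cases hv : ∃ i, i + 1 < r ∧ x i = v
  · obtain ⟨i, hi, rfl⟩ := hv
    refine ⟨A (i + 1), ⟨hp.mem _ hi, mem_pathShift.2 (Or.inr ⟨i, hi, rfl, rfl⟩)⟩, ?_⟩
    rintro T ⟨-, hxT⟩
    rcases mem_pathShift.1 hxT with ⟨-, hne⟩ | ⟨j, hj, rfl, hji⟩
    · exact absurd rfl (hne i hi)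
    · rw [hp.leaf_inj hP hj hi hji]
  · push Not at hv
    obtain ⟨S, ⟨hS, hvS⟩, hSuniq⟩ := hP.1 v
    refine ⟨S, ⟨hS, mem_pathShift.2 (Or.inl ⟨hvS, hv⟩)⟩, ?_⟩
    rintro T ⟨hT, hvT⟩
    rcases mem_pathShift.1 hvT with ⟨hvT, -⟩ | ⟨j, hj, -, rfl⟩
    · exact hSuniq T ⟨hT, hvT⟩
    · exact absurd rfl (hv j hj)

theorem center_mem_pathShift (hp : IsStarDigraphPath G P center r A x)
    (hP : IsCenteredStarPartition G P center) {S : Finset V} (hS : S ∈ P) :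
    center S ∈ pathShift r A x S := by
  have hcS := (hP.2.2 S hS).1
  refine mem_pathShift.2 (Or.inl ⟨hcS, fun i hi hxi => ?_⟩)
  obtain rfl := hp.eq_of_leaf_mem hP hS hi (hxi ▸ hcS)
  exact hp.leaf_ne_center i hi hxi

theorem adj_center_of_mem_pathShift (hp : IsStarDigraphPath G P center r A x)
    (hP : IsCenteredStarPartition G P center) {S : Finset V} (hS : S ∈ P) {v : V}
    (hv : v ∈ pathShift r A x S) (hvc : v ≠ center S) : G.Adj (center S) v := by
  rcases mem_pathShift.1 hv with ⟨hvS, -⟩ | ⟨i, hi, rfl, rfl⟩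
  · exact (hP.2.2 S hS).2 v hvS hvc
  · exact (hp.adj i hi).symm

theorem card_pathShift_add (hp : IsStarDigraphPath G P center r A x)
    (hP : IsCenteredStarPartition G P center) {S : Finset V} (hS : S ∈ P) :
    #(pathShift r A x S) + #{i ∈ range (r - 1) | A i = S} =
      #S + #{i ∈ range (r - 1) | A (i + 1) = S} := by
  have hcard_image : ∀ p : ℕ → Prop, [DecidablePred p] →
      #({i ∈ range (r - 1) | p i}.image x) = #{i ∈ range (r - 1) | p i} := by
    refine fun p _ => card_image_of_injOn fun i hi j hj h => hp.leaf_inj hP ?_ ?_ h <;>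
      simp_all only [coe_filter, Set.mem_ofPred_eq, mem_range] <;> omega
  have hinter : S ∩ (range (r - 1)).image x = {i ∈ range (r - 1) | A i = S}.image x := by
    ext v
    simp only [mem_inter, mem_image, mem_filter, mem_range]
    constructor
    · rintro ⟨hvS, i, hi, rfl⟩
      exact ⟨i, ⟨hi, hp.eq_of_leaf_mem hP hS (by omega) hvS⟩, rfl⟩
    · rintro ⟨i, ⟨hi, rfl⟩, rfl⟩
      exact ⟨hp.leaf_mem i (by omega), i, hi, rfl⟩
  have hdisj : Disjoint (S \ (range (r - 1)).image x)
      ({i ∈ range (r - 1) | A (i + 1) = S}.image x) :=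
    disjoint_sdiff_self_left.mono_right (image_subset_image (filter_subset _ _))
  have hsplit := card_sdiff_add_card_inter S ((range (r - 1)).image x)
  rw [pathShift, card_union_of_disjoint hdisj, hcard_image]
  rw [hinter, hcard_image] at hsplit
  omega

theorem card_filter_eq_le_one (hp : IsStarDigraphPath G P center r A x) (S : Finset V) :
    #{i ∈ range (r - 1) | A i = S} ≤ 1 :=
  card_le_one.2 fun i hi j hj => by
    simp only [mem_filter, mem_range] at hi hj
    exact hp.injOn (show i < r by omega) (show j < r by omega) (hi.2.trans hj.2.symm)

theorem card_filter_succ_eq_le_one (hp : IsStarDigraphPath G P center r A x) (S : Finset V) :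
    #{i ∈ range (r - 1) | A (i + 1) = S} ≤ 1 :=
  card_le_one.2 fun i hi j hj => by
    simp only [mem_filter, mem_range] at hi hj
    have := hp.injOn (show i + 1 < r by omega) (show j + 1 < r by omega) (hi.2.trans hj.2.symm)
    omega

theorem card_pathShift_first (hp : IsStarDigraphPath G P center r A x)
    (hP : IsCenteredStarPartition G P center) (hr : 1 < r) :
    #(pathShift r A x (A 0)) + 1 = #(A 0) := by
  have hout : #{i ∈ range (r - 1) | A i = A 0} = 1 :=
    le_antisymm (hp.card_filter_eq_le_one _) (card_pos.2 ⟨0, by simp; omega⟩)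
  have hin : #{i ∈ range (r - 1) | A (i + 1) = A 0} = 0 := by
    refine card_eq_zero.2 (filter_eq_empty_iff.2 fun i hi h => ?_)
    have := hp.injOn (show i + 1 < r by simp at hi; omega) (show 0 < r by omega) h
    omega
  have := hp.card_pathShift_add hP (hp.mem 0 (by omega))
  omega

theorem card_pathShift_cases (hp : IsStarDigraphPath G P center r A x)
    (hP : IsCenteredStarPartition G P center) {S : Finset V} (hS : S ∈ P) :
    #(pathShift r A x S) = #S ∨ (S = A 0 ∧ #(pathShift r A x S) + 1 = #S) ∨
      (S = A (r - 1) ∧ #(pathShift r A x S) = #S + 1) := by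
  have key := hp.card_pathShift_add hP hS
  rcases Nat.le_one_iff_eq_zero_or_eq_one.1 (hp.card_filter_eq_le_one S) with hout | hout <;>
    rcases Nat.le_one_iff_eq_zero_or_eq_one.1 (hp.card_filter_succ_eq_le_one S) with hin | hin
  · omega
  · obtain ⟨i, hi⟩ := card_pos.1 (show 0 < #{i ∈ range (r - 1) | A (i + 1) = S} by omega)
    rw [mem_filter, mem_range] at hi
    refine Or.inr (Or.inr ⟨?_, by omega⟩)
    obtain h | h : i + 1 = r - 1 ∨ i + 1 < r - 1 := by omega
    · rw [← h, hi.2]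
    · exact absurd hi.2 (filter_eq_empty_iff.1 (card_eq_zero.1 hout) (mem_range.2 h))
  · obtain ⟨i, hi⟩ := card_pos.1 (show 0 < #{i ∈ range (r - 1) | A i = S} by omega)
    rw [mem_filter, mem_range] at hi
    refine Or.inr (Or.inl ⟨?_, by omega⟩)
    cases i with
    | zero => exact hi.2.symm
    | succ j =>
      exact absurd hi.2 (filter_eq_empty_iff.1 (card_eq_zero.1 hin) (mem_range.2 (by omega)))
  · omega

theorem exists_starPartition_not_lexLE (hp : IsStarDigraphPath G P center r A x)
    (hP : IsCenteredStarPartition G P center) {k : ℕ} (hfirst : #(A 0) = k + 1)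
    (hlast : #(A (r - 1)) < k) :
    ∃ Q, IsStarPartition G Q ∧ ¬ LexLE (starCounts P) (starCounts Q) := by
  have hr : 1 < r := by
    by_contra h
    rw [show r - 1 = 0 by omega] at hlast
    omega
  have hA0 := hp.mem 0 (by omega)
  have hk : 2 < k := (hP.2.1 _ (hp.mem (r - 1) (by omega))).trans_lt hlast
  have hshift0 := hp.card_pathShift_first hP hr
  have huniq := hp.existsUnique_mem_pathShift hP
  have hcenter := fun S (hS : S ∈ P) => hp.center_mem_pathShift hP hS
  have hsize : ∀ S ∈ P, #(pathShift r A x S) = #S ∨ #(pathShift r A x S) ≤ k := by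
    intro S hS
    rcases hp.card_pathShift_cases hP hS with h | ⟨rfl, h⟩ | ⟨rfl, h⟩ <;> omega
  refine ⟨P.image (pathShift r A x), isStarPartition_image huniq hcenter
    (fun S hS v hv hvc => hp.adj_center_of_mem_pathShift hP hS hv hvc) (fun S hS => ?_),
    not_lexLE_starCounts_image (injOn_of_existsUnique_mem huniq fun S hS => ⟨_, hcenter S hS⟩)
      hsize hA0 hfirst (by omega)⟩
  have := hP.2.1 S hS
  rcases hp.card_pathShift_cases hP hS with h | ⟨rfl, h⟩ | ⟨rfl, h⟩ <;> omega

end IsStarDigraphPath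

/-- Let `A 0, A 1, …, A (r-1)` be pairwise distinct parts of a
lexicographically optimal star partition such that `A 0` is a `σ(G)`-star (it has
`σ(G) + 1` vertices) and, for each consecutive pair, some leaf of `A j` is adjacent in
`G` to the designated center of `A (j+1)`. Then the last part has at least `σ(G)`
vertices. -/
theorem stmt11 {V : Type*} [Fintype V] [DecidableEq V] (G : SimpleGraph V)
    (P : Finset (Finset V)) (center : Finset V → V)
    (hP : IsCenteredStarPartition G P center)
    (hopt : ∀ Q : Finset (Finset V), IsStarPartition G Q →
      LexLE (starCounts P) (starCounts Q))
    (r : ℕ) (hr : 0 < r) (A : Fin r → Finset V)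
    (hinj : Function.Injective A) (hmem : ∀ j : Fin r, A j ∈ P)
    (hfirst : (A ⟨0, hr⟩).card = starPartitionWidth G + 1)
    (hpath : ∀ j : ℕ, ∀ h : j + 1 < r,
      ∃ x ∈ A ⟨j, by omega⟩, x ≠ center (A ⟨j, by omega⟩) ∧
        G.Adj x (center (A ⟨j + 1, h⟩))) :
    starPartitionWidth G ≤ (A ⟨r - 1, by omega⟩).card := by
  by_contra! hlt
  have : Nonempty V := ⟨center (A ⟨0, hr⟩)⟩
  choose! x hxA hxc hxadj using hpath
  let B : ℕ → Finset V := fun j => if h : j < r then A ⟨j, h⟩ else ∅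
  have hB : ∀ j (h : j < r), B j = A ⟨j, h⟩ := fun j h => dif_pos h
  have hpB : IsStarDigraphPath G P center r B x :=
    { mem := fun j hj => hB j hj ▸ hmem _
      injOn := fun i hi j hj h =>
        congrArg Fin.val (hinj ((hB i hi).symm.trans (h.trans (hB j hj))))
      leaf_mem := fun j hj => hB j (by omega) ▸ hxA j hj
      leaf_ne_center := fun j hj => hB j (by omega) ▸ hxc j hj
      adj := fun j hj => by rw [hB (j + 1) hj]; exact hxadj j hj }
  obtain ⟨Q, hQ, hnot⟩ := hpB.exists_starPartition_not_lexLE hP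
    (hB 0 hr ▸ hfirst) (hB (r - 1) (by omega) ▸ hlt)
  exact hnot (hopt Q hQ)
end

section
/- Let k ≥ 2 and let G be a finite simple graph without isolated vertices that contains no induced subgraph isomorphic to the star K_{1,k}. Then for every vertex v of G there exists a set D of vertices of G with v ∉ D and |D| ≤ k − 1 such that every vertex u in the open neighborhood N(v) either belongs to D or is adjacent in G to some vertex of D. (In particular, the local domination number γ̃(G) is at most k − 1.) -/
/-- If `k ≥ 2` and `G` is a finite simple graph without isolated
vertices containing no induced copy of the star `K_{1,k}`, then for each vertex `v`
there is a set `D` of at most `k − 1` vertices, not containing `v`, dominating the open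
neighborhood `N(v)` in `G − v`.  (Hence the local domination number of `G` is at most
`k − 1`.) -/
theorem stmt12 {V : Type*} [Fintype V] [DecidableEq V] (G : SimpleGraph V)
    (k : ℕ) (hk : 2 ≤ k)
    (hiso : ∀ v : V, ∃ u : V, G.Adj v u)
    (hfree : ¬ Nonempty (completeBipartiteGraph Unit (Fin k) ↪g G)) :
    ∀ v : V, ∃ D : Finset V, v ∉ D ∧ D.card ≤ k - 1 ∧
      ∀ u : V, G.Adj v u → (u ∈ D ∨ ∃ d ∈ D, G.Adj u d) := by
  classical
  intro v
  set S := G.neighborFinset v with hS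
  set Ps := (S.powerset).filter
      (fun D => ∀ a ∈ D, ∀ b ∈ D, a ≠ b → ¬ G.Adj a b) with hPs
  have hemp : (∅ : Finset V) ∈ Ps := by simp [hPs]
  obtain ⟨D, hDPs, hDmax⟩ := Ps.exists_max_image Finset.card ⟨∅, hemp⟩
  rw [hPs, Finset.mem_filter, Finset.mem_powerset] at hDPs
  obtain ⟨hDsub, hDind⟩ := hDPs
  have hvS : v ∉ S := by simp [hS]
  refine ⟨D, fun h => hvS (hDsub h), ?_, ?_⟩
  · -- cardinality bound
    by_contra hcard
    push_neg at hcard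
    have hkD : k ≤ D.card := by omega
    obtain ⟨T, hTsub, hTcard⟩ := Finset.exists_subset_card_eq hkD
    let f : Fin k ↪ V :=
      ((T.equivFinOfCardEq hTcard).symm.toEmbedding).trans (Function.Embedding.subtype _)
    have hfT : ∀ i, (f i : V) ∈ T := fun i => ((T.equivFinOfCardEq hTcard).symm i).2
    have hfD : ∀ i, (f i : V) ∈ D := fun i => hTsub (hfT i)
    have hfadj : ∀ i, G.Adj v (f i) := fun i => by
      have := hDsub (hfD i); rw [hS, SimpleGraph.mem_neighborFinset] at this; exact this
    have hfv : ∀ i, f i ≠ v := fun i h => by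
      exact G.irrefl (h ▸ hfadj i)
    refine hfree ⟨⟨⟨Sum.elim (fun _ => v) (fun i => f i), ?_⟩, ?_⟩⟩
    · rintro (⟨⟩ | i) (⟨⟩ | j) h
      · rfl
      · exact absurd h.symm (hfv j)
      · exact absurd h (hfv i)
      · simp only [Sum.elim_inr] at h
        exact congrArg Sum.inr (f.injective h)
    · rintro (⟨⟩ | i) (⟨⟩ | j)
      · simp only [Sum.elim_inl, completeBipartiteGraph_adj]
        simp [G.irrefl]
      · simp only [Sum.elim_inl, Sum.elim_inr, completeBipartiteGraph_adj]
        simp [hfadj j]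
        exact hfadj j
      · simp only [Sum.elim_inl, Sum.elim_inr, completeBipartiteGraph_adj]
        simp [(hfadj i).symm]
        exact (hfadj i).symm
      · simp only [Sum.elim_inr, completeBipartiteGraph_adj]
        simp only [Sum.isLeft_inr, Sum.isRight_inr, Bool.false_eq_true, false_and,
          and_false, or_self, iff_false]
        intro h
        by_cases hij : i = j
        · subst hij; exact G.irrefl h
        · exact hDind _ (hfD i) _ (hfD j) (fun he => hij (f.injective he)) h
  · -- domination
    intro u hadj
    by_cases hu : u ∈ D
    · exact Or.inl hu
    right
    by_contra hno
    push_neg at hno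
    have hins : insert u D ∈ Ps := by
      rw [hPs, Finset.mem_filter, Finset.mem_powerset]
      constructor
      · intro x hx
        rcases Finset.mem_insert.mp hx with rfl | hx
        · rw [hS, SimpleGraph.mem_neighborFinset]; exact hadj
        · exact hDsub hx
      · intro a ha b hb hab
        rcases Finset.mem_insert.mp ha with rfl | ha'
        · rcases Finset.mem_insert.mp hb with rfl | hb'
          · exact absurd rfl hab
          · exact hno b hb'
        · rcases Finset.mem_insert.mp hb with rfl | hb'
          · intro h; exact hno a ha' h.symm
          · exact hDind a ha' b hb' hab
    have := hDmax _ hins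
    have : D.card + 1 ≤ D.card := by
      rwa [Finset.card_insert_of_notMem hu] at this
    omega
end

section
/- Let t be a positive integer and let H be a finite simple graph with minimum degree δ(H) ≥ 2t. Then one can assign to every vertex v of H a set R_v of exactly t edges of H, each incident to v, such that the sets R_v are pairwise disjoint (that is, the family of edge-incidence sets {E_v : v ∈ V(H)}, where E_v is the set of edges incident to v, admits a set of distinct t-representatives). -/
/-- If `H` is a finite simple graph with minimum degree at least `2t`
(`t ≥ 1`), then one can choose, for every vertex `v`, a set `R v` of exactly `t` edges
incident to `v`, such that the sets `R v` are pairwise disjoint; i.e. the family of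
edge-incidence sets admits a set of distinct `t`-representatives. -/
theorem stmt14 {V : Type*} [Fintype V] [DecidableEq V] (H : SimpleGraph V)
    (t : ℕ) (ht : 0 < t)
    (hdeg : ∀ v : V, 2 * t ≤ (H.neighborSet v).ncard) :
    ∃ R : V → Finset (Sym2 V),
      (∀ v : V, (R v).card = t ∧ ∀ e ∈ R v, e ∈ H.edgeSet ∧ v ∈ e) ∧
      ∀ u v : V, u ≠ v → Disjoint (R u) (R v) := by
  classical
  set E : V → Finset (Sym2 V) := fun v => (H.incidenceSet v).toFinset with hE
  have hmemE : ∀ v (e : Sym2 V), e ∈ E v ↔ e ∈ H.edgeSet ∧ v ∈ e := by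
    intro v e
    show e ∈ (H.incidenceSet v).toFinset ↔ _
    rw [Set.mem_toFinset]; rfl
  have hcardE : ∀ v, 2 * t ≤ (E v).card := by
    intro v
    have h1 : (H.neighborSet v).ncard = (E v).card := by
      rw [hE, Set.toFinset_card, SimpleGraph.card_incidenceSet_eq_degree,
        ← SimpleGraph.card_neighborSet_eq_degree, Set.ncard_eq_toFinset_card', Set.toFinset_card]
    rw [← h1]; exact hdeg v
  -- Hall condition on copies
  have hall : ∀ s : Finset (V × Fin t), s.card ≤ (s.biUnion (fun p => E p.1)).card := by
    intro s
    set P : Finset V := s.image Prod.fst with hP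
    have hU : s.biUnion (fun p => E p.1) = P.biUnion E := by
      rw [hP, Finset.image_biUnion]
    rw [hU]
    set U : Finset (Sym2 V) := P.biUnion E with hUdef
    -- each E v ⊆ U for v ∈ P
    have hsub : ∀ v ∈ P, E v ⊆ U := fun v hv => Finset.subset_biUnion_of_mem E hv
    -- s.card ≤ t * P.card
    have h1 : s.card ≤ P.card * t := by
      calc s.card ≤ (P ×ˢ (Finset.univ : Finset (Fin t))).card := by
            apply Finset.card_le_card
            intro p hp
            rw [Finset.mem_product]
            exact ⟨Finset.mem_image_of_mem _ hp, Finset.mem_univ _⟩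
        _ = P.card * t := by rw [Finset.card_product, Finset.card_univ, Fintype.card_fin]
    -- double counting: ∑_{v∈P} (E v).card ≤ 2 * U.card
    have h2 : ∑ v ∈ P, (E v).card ≤ 2 * U.card := by
      have : ∀ v ∈ P, (E v).card = (U.filter (fun e => e ∈ E v)).card := by
        intro v hv
        congr 1
        rw [Finset.filter_mem_eq_inter, Finset.inter_eq_right.mpr (hsub v hv)]
      rw [Finset.sum_congr rfl this]
      calc ∑ v ∈ P, (U.filter (fun e => e ∈ E v)).card
          = ∑ e ∈ U, (P.filter (fun v => e ∈ E v)).card := by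
            simp_rw [Finset.card_filter]
            exact Finset.sum_comm
        _ ≤ ∑ _e ∈ U, 2 := by
            apply Finset.sum_le_sum
            intro e he
            induction e with
            | h a b =>
              have : P.filter (fun v => s(a, b) ∈ E v) ⊆ {a, b} := by
                intro v hv
                rw [Finset.mem_filter] at hv
                have := ((hmemE v _).mp hv.2).2
                rw [Sym2.mem_iff] at this
                simpa [Finset.mem_insert] using this
              calc (P.filter (fun v => s(a, b) ∈ E v)).card ≤ ({a, b} : Finset V).card :=
                    Finset.card_le_card this
                _ ≤ 2 := Finset.card_insert_le _ _ |>.trans (by simp)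
        _ = 2 * U.card := by rw [Finset.sum_const, smul_eq_mul, mul_comm]
    -- 2 * (P.card * t) ≤ ∑ (E v).card
    have h3 : 2 * (P.card * t) ≤ ∑ v ∈ P, (E v).card := by
      calc 2 * (P.card * t) = ∑ _v ∈ P, 2 * t := by rw [Finset.sum_const, smul_eq_mul]; ring
        _ ≤ ∑ v ∈ P, (E v).card := Finset.sum_le_sum fun v _ => hcardE v
    have h4 : P.card * t ≤ U.card := Nat.le_of_mul_le_mul_left (h3.trans h2) (by norm_num)
    exact h1.trans h4
  obtain ⟨f, hfinj, hf⟩ :=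
    (Finset.all_card_le_biUnion_card_iff_exists_injective (fun p : V × Fin t => E p.1)).mp hall
  refine ⟨fun v => (Finset.univ : Finset (Fin t)).image (fun i => f (v, i)), ?_, ?_⟩
  · intro v
    constructor
    · rw [Finset.card_image_of_injective _ (fun i j hij => by
        have := hfinj hij; exact (Prod.mk.injEq _ _ _ _ ▸ this).2),
        Finset.card_univ, Fintype.card_fin]
    · intro e he
      rw [Finset.mem_image] at he
      obtain ⟨i, _, rfl⟩ := he
      exact (hmemE v _).mp (hf (v, i))
  · intro u v huv
    rw [Finset.disjoint_left]
    intro e heu hev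
    rw [Finset.mem_image] at heu hev
    obtain ⟨i, _, hi⟩ := heu
    obtain ⟨j, _, hj⟩ := hev
    exact huv (congrArg Prod.fst (hfinj (hi.trans hj.symm)))
end

section
/- A finite simple graph G has a nontrivial path cover if and only if G has a 2-star partition. -/
/-- `G` has a nontrivial path cover: a spanning subgraph whose components are paths of
order at least two, i.e. an acyclic spanning subgraph in which every vertex has degree
`1` or `2`. -/
def HasNontrivialPathCover {V : Type*} [Fintype V] [DecidableEq V]
    (G : SimpleGraph V) : Prop :=
  ∃ H : SimpleGraph V, H ≤ G ∧ H.IsAcyclic ∧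
    ∀ v : V, 1 ≤ (H.neighborSet v).ncard ∧ (H.neighborSet v).ncard ≤ 2

namespace SimpleGraph

variable {V : Type*} {G H F : SimpleGraph V}

/-- Every component is a star (possibly a single vertex). -/
def IsStarForest (F : SimpleGraph V) : Prop :=
  ∀ ⦃u v⦄, F.Adj u v → F.neighborSet u = {v} ∨ F.neighborSet v = {u}

theorem IsStarForest.isAcyclic (hF : F.IsStarForest) : F.IsAcyclic := by
  intro v p hp
  have not_leaf : ∀ x ∈ p.support, ∀ y, F.neighborSet x ≠ {y} := by
    intro x hx y hxy
    have := Set.ncard_le_ncard (hxy ▸ p.toSubgraph.neighborSet_subset x)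
    rw [hp.ncard_neighborSet_toSubgraph_eq_two hx, Set.ncard_singleton] at this
    omega
  have hsnd : p.snd ∈ p.support := p.getVert_mem_support 1
  rcases hF (p.adj_snd hp.not_nil) with h | h
  · exact not_leaf v p.start_mem_support _ h
  · exact not_leaf _ hsnd _ h

theorem exists_isStarForest_le [Finite V] (hH : ∀ v, (H.neighborSet v).Nonempty) :
    ∃ F ≤ H, F.IsStarForest ∧ ∀ v, (F.neighborSet v).Nonempty := by
  obtain ⟨F, hFH, hmin⟩ :=
    exists_minimal_le_of_wellFoundedLT (fun F : SimpleGraph V ↦ ∀ v, (F.neighborSet v).Nonempty)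
      H hH
  refine ⟨F, hFH, fun u v huv ↦ ?_, hmin.prop⟩
  by_contra! h
  obtain ⟨u', hu', hu'v⟩ := ((Set.nontrivial_iff_ne_singleton huv).mpr h.1).exists_ne v
  obtain ⟨v', hv', hv'u⟩ := ((Set.nontrivial_iff_ne_singleton huv.symm).mpr h.2).exists_ne u
  set F' := F.deleteEdges {s(u, v)}
  have hF' : ∀ x, (F'.neighborSet x).Nonempty := by
    intro x
    by_cases hxu : x = u
    · subst hxu; exact ⟨u', by simp [F', show F.Adj x u' from hu', hu'v, huv.ne]⟩
    by_cases hxv : x = v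
    · subst hxv; exact ⟨v', by simp [F', show F.Adj x v' from hv', hv'u, huv.ne']⟩
    obtain ⟨y, hy⟩ := hmin.prop x
    exact ⟨y, by simp [F', hy.out, hxu, hxv]⟩
  have := hmin.2 hF' (deleteEdges_le _) huv
  simp [F'] at this

theorem reachable_iff_of_forall_adj {c x : V} (hc : ∀ a, F.Adj c a → F.neighborSet a = {c}) :
    F.Reachable c x ↔ x = c ∨ F.Adj c x := by
  refine ⟨fun h ↦ ?_, by rintro (rfl | h); exacts [Reachable.rfl, h.reachable]⟩
  rw [reachable_iff_reflTransGen] at h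
  induction h with
  | refl => exact .inl rfl
  | tail _ hyz ih =>
    rcases ih with rfl | hcy
    · exact .inr hyz
    · exact .inl ((hc _ hcy).subset hyz)

theorem IsStarForest.exists_reachable_center (hF : F.IsStarForest) (v : V) :
    ∃ c, F.Reachable v c ∧ ∀ a, F.Adj c a → F.neighborSet a = {c} := by
  by_cases hv : ∀ a, F.Adj v a → F.neighborSet a = {v}
  · exact ⟨v, .rfl, hv⟩
  push Not at hv
  obtain ⟨w, hvw, hw⟩ := hv
  refine ⟨w, hvw.reachable, fun a hwa ↦ (hF hwa).resolve_left fun hNw ↦ hw ?_⟩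
  have : v = a := hNw.subset hvw.symm
  rwa [← this] at hNw

theorem IsStarForest.exists_partition [Fintype V] (hF : F.IsStarForest) :
    ∃ P : Finset (Finset V), (∀ v, ∃! S, S ∈ P ∧ v ∈ S) ∧
      ∀ S ∈ P, ∃ c, (S : Set V) = insert c (F.neighborSet c) := by
  classical
  let Q := Finpartition.ofSetoid F.reachableSetoid
  refine ⟨Q.parts, fun v ↦ Q.existsUnique_mem (Finset.mem_univ v), fun S hS ↦ ?_⟩
  obtain ⟨v, -, rfl⟩ := Q.part_surjOn hS
  obtain ⟨c, hvc, hc⟩ := hF.exists_reachable_center v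
  refine ⟨c, Set.ext fun x ↦ ?_⟩
  rw [Finset.mem_coe, Finpartition.mem_part_ofSetoid_iff_rel, Set.mem_insert_iff,
    mem_neighborSet, ← reachable_iff_of_forall_adj hc]
  exact ⟨hvc.symm.trans, hvc.trans⟩

theorem exists_isStarPartition_of_le [Fintype V] [DecidableEq V] (hHG : H ≤ G)
    (hH : ∀ v, (H.neighborSet v).Nonempty) :
    ∃ P, IsStarPartition G P ∧ ∀ S ∈ P, ∃ c, S.card ≤ (H.neighborSet c).ncard + 1 := by
  obtain ⟨F, hFH, hF, hFiso⟩ := exists_isStarForest_le hH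
  obtain ⟨P, hPart, hstar⟩ := hF.exists_partition
  have hcard : ∀ S ∈ P, ∃ c ∈ S, (∀ v ∈ S, v ≠ c → F.Adj c v) ∧
      S.card = (F.neighborSet c).ncard + 1 := by
    intro S hS
    obtain ⟨c, hc⟩ := hstar S hS
    refine ⟨c, by simp [← Finset.mem_coe, hc], fun v hv hvc ↦ ?_, ?_⟩
    · simpa [← Finset.mem_coe, hc, hvc] using hv
    · rw [← Set.ncard_coe_finset, hc, Set.ncard_insert_of_notMem (F.notMem_neighborSet_self)]
  refine ⟨P, ⟨hPart, fun S hS ↦ ?_, fun S hS ↦ ?_⟩, fun S hS ↦ ?_⟩ <;>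
    obtain ⟨c, hcS, hadj, hSc⟩ := hcard S hS
  · have := (Set.ncard_pos).mpr (hFiso c)
    omega
  · exact ⟨c, hcS, fun v hv hvc ↦ hHG (hFH (hadj v hv hvc))⟩
  · have := Set.ncard_le_ncard (neighborSet_mono hFH c)
    exact ⟨c, by omega⟩

/-- For idempotent `f`, a star forest whose centres are the fixed points of `f`. -/
def ofMap (f : V → V) : SimpleGraph V :=
  fromRel fun x y ↦ y = f x

theorem neighborSet_ofMap_of_ne {f : V → V} (hf : ∀ x, f (f x) = f x) {x : V} (hx : f x ≠ x) :
    (ofMap f).neighborSet x = {f x} := by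
  ext y
  simp only [mem_neighborSet, ofMap, fromRel_adj, Set.mem_singleton_iff]
  refine ⟨fun ⟨_, hy⟩ ↦ hy.resolve_right ?_, fun hy ↦ ⟨hy ▸ hx.symm, .inl hy⟩⟩
  rintro rfl
  exact hx (hf y)

theorem neighborSet_ofMap_of_eq {f : V → V} {x : V} (hx : f x = x) :
    (ofMap f).neighborSet x = {y | y ≠ x ∧ f y = x} := by
  ext y
  simp only [mem_neighborSet, ofMap, fromRel_adj, Set.mem_ofPred_eq]
  refine ⟨fun ⟨hxy, hy⟩ ↦ ⟨hxy.symm, hy.resolve_left ?_ |>.symm⟩,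
    fun ⟨hyx, hy⟩ ↦ ⟨hyx.symm, .inr hy.symm⟩⟩
  rintro rfl
  exact hxy hx.symm

theorem isStarForest_ofMap {f : V → V} (hf : ∀ x, f (f x) = f x) : (ofMap f).IsStarForest := by
  rintro x y ⟨hxy, rfl | rfl⟩
  · exact .inl (neighborSet_ofMap_of_ne hf fun h ↦ hxy h.symm)
  · exact .inr (neighborSet_ofMap_of_ne hf hxy)

end SimpleGraph

open SimpleGraph in
theorem IsStarPartition.exists_isStarForest {V : Type*} [Fintype V] [DecidableEq V]
    {G : SimpleGraph V} {P : Finset (Finset V)} (hP : IsStarPartition G P) :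
    ∃ F ≤ G, F.IsStarForest ∧ ∀ v, ∃ S ∈ P,
      1 ≤ (F.neighborSet v).ncard ∧ (F.neighborSet v).ncard + 1 ≤ S.card := by
  obtain ⟨hPart, hcard, hstar⟩ := hP
  choose part hpart using fun v ↦ (hPart v).exists
  choose ctr hctr using hstar
  set f : V → V := fun v ↦ ctr (part v) (hpart v).1
  have part_eq : ∀ {v w}, w ∈ part v → part w = part v :=
    fun hw ↦ (hPart _).unique (hpart _) ⟨(hpart _).1, hw⟩
  have hf_mem : ∀ v, f v ∈ part v := fun v ↦ (hctr _ _).1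
  have hf_congr : ∀ {v w}, part w = part v → f w = f v := by
    intro v w h
    simp only [f]
    congr 1
  have hf : ∀ v, f (f v) = f v := fun v ↦ hf_congr (part_eq (hf_mem v))
  have hfiber : ∀ {v w}, f v = v → (f w = v ↔ w ∈ part v) := by
    intro v w hv
    refine ⟨fun hw ↦ ?_, fun hw ↦ (hf_congr (part_eq hw)).trans hv⟩
    rw [part_eq (hw ▸ hf_mem w)]
    exact (hpart w).2
  refine ⟨ofMap f, ?_, isStarForest_ofMap hf, fun v ↦ ⟨part v, (hpart v).1, ?_⟩⟩
  · rintro x y ⟨hxy, rfl | rfl⟩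
    · exact (hctr _ _).2 x (hpart x).2 hxy |>.symm
    · exact (hctr _ _).2 y (hpart y).2 hxy.symm
  by_cases hv : f v = v
  · have hN : (ofMap f).neighborSet v = ↑((part v).erase v) := by
      rw [neighborSet_ofMap_of_eq hv]
      ext w
      simp [hfiber hv, and_comm]
    have := hcard _ (hpart v).1
    rw [hN, Set.ncard_coe_finset, Finset.card_erase_of_mem (hpart v).2]
    omega
  · rw [neighborSet_ofMap_of_ne hf hv, Set.ncard_singleton]
    exact ⟨le_rfl, hcard _ (hpart v).1⟩

/-- A finite simple graph has a nontrivial path cover iff it has a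
`2`-star partition (every part has at most `3` vertices). -/
theorem stmt15 {V : Type*} [Fintype V] [DecidableEq V] (G : SimpleGraph V) :
    HasNontrivialPathCover G ↔
      ∃ P : Finset (Finset V), IsStarPartition G P ∧ ∀ S ∈ P, S.card ≤ 2 + 1 := by
  constructor
  · rintro ⟨H, hHG, -, hdeg⟩
    obtain ⟨P, hP, hcard⟩ := SimpleGraph.exists_isStarPartition_of_le hHG
      fun v ↦ (Set.ncard_pos).mp (hdeg v).1
    refine ⟨P, hP, fun S hS ↦ ?_⟩
    obtain ⟨c, hc⟩ := hcard S hS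
    linarith [(hdeg c).2]
  · rintro ⟨P, hP, hcard⟩
    obtain ⟨F, hFG, hF, hdeg⟩ := hP.exists_isStarForest
    refine ⟨F, hFG, hF.isAcyclic, fun v ↦ ?_⟩
    obtain ⟨S, hS, hdeg₁, hdeg₂⟩ := hdeg v
    have := hcard S hS
    omega
end
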